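/- arXiv:1807.09404 — 8 statements merged into one kernel-verified Lean document; each statement's English description precedes it below -/
import Mathlib

section
/- Let G be a graph of order n with maximum degree Δ(G) = 2, and let S be a positive semidefinite zero forcing set of G. Then n ≤ |S|·(1 + 2·pt₊(G;S)), where pt₊(G;S) is the PSD propagation time of S. -/
open SimpleGraph

/-- Reachability in `G` avoiding the blue set `B` (i.e., within a white component). -/
def offReach {V : Type*} (G : SimpleGraph V) (B : Set V) : V → V → Prop :=
  Relation.ReflTransGen (fun a b => G.Adj a b ∧ a ∉ B ∧ b ∉ B)

/-- The positive semidefinite color change rule: a blue vertex `v` forces a white vertex `w`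
if `w` is the unique white neighbor of `v` in the white component of `w` (together with `B`). -/
def psdForces {V : Type*} (G : SimpleGraph V) (B : Set V) (v w : V) : Prop :=
  v ∈ B ∧ w ∉ B ∧ G.Adj v w ∧
    ∀ u, u ∉ B → G.Adj v u → offReach G B u w → u = w

/-- One round of PSD forcing: perform all possible forces. -/
def psdStep {V : Type*} (G : SimpleGraph V) (B : Set V) : Set V :=
  B ∪ {w | ∃ v, psdForces G B v w}

/-- `S` is a positive semidefinite zero forcing set. -/
def IsPSDForcingSet {V : Type*} (G : SimpleGraph V) (S : Set V) : Prop :=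
  ∃ t, (psdStep G)^[t] S = Set.univ

/-- The PSD propagation time of `S`. -/
noncomputable def psdPt {V : Type*} (G : SimpleGraph V) (S : Set V) : ℕ :=
  sInf {t | (psdStep G)^[t] S = Set.univ}

/-- The PSD throttling number of `G`. -/
noncomputable def psdTh {V : Type*} (G : SimpleGraph V) [Fintype V] : ℕ :=
  sInf {k | ∃ S : Finset V, IsPSDForcingSet G ↑S ∧ k = S.card + psdPt G ↑S}

/- ### Auxiliary development -/

/-- The round at which `v` becomes blue. -/
noncomputable def rnd {V : Type*} (G : SimpleGraph V) (S : Set V) (v : V) : ℕ :=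
  sInf {n | v ∈ (psdStep G)^[n] S}

section Aux

variable {V : Type*} (G : SimpleGraph V) (S : Set V)

lemma psd_subset_step (B : Set V) : B ⊆ psdStep G B := Set.subset_union_left

lemma psd_iter_mono {m n : ℕ} (h : m ≤ n) :
    (psdStep G)^[m] S ⊆ (psdStep G)^[n] S := by
  induction n with
  | zero =>
    have : m = 0 := by omega
    subst this; rfl
  | succ n ih =>
    rcases Nat.lt_or_ge m (n + 1) with h' | h'
    · refine (ih (by omega)).trans ?_
      rw [Function.iterate_succ_apply']
      exact psd_subset_step G _
    · have : m = n + 1 := by omega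
      subst this; rfl

lemma mem_rnd (hS : IsPSDForcingSet G S) (v : V) :
    v ∈ (psdStep G)^[rnd G S v] S := by
  obtain ⟨t, ht⟩ := hS
  have : ({n | v ∈ (psdStep G)^[n] S}).Nonempty := ⟨t, by simp [ht]⟩
  exact Nat.sInf_mem this

lemma rnd_le {t : ℕ} {v : V} (h : v ∈ (psdStep G)^[t] S) : rnd G S v ≤ t :=
  Nat.sInf_le h

/-- Each vertex is reached by a forcing chain from `S` along which rounds strictly increase. -/
lemma chain_exists (hS : IsPSDForcingSet G S) (v : V) :
    ∃ (m : ℕ) (c : ℕ → V), c m = v ∧ c 0 ∈ S ∧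
      (∀ i < m, G.Adj (c i) (c (i + 1))) ∧
      (∀ i < m, rnd G S (c i) < rnd G S (c (i + 1))) := by
  suffices h : ∀ n, ∀ v : V, rnd G S v ≤ n →
      ∃ (m : ℕ) (c : ℕ → V), c m = v ∧ c 0 ∈ S ∧
        (∀ i < m, G.Adj (c i) (c (i + 1))) ∧
        (∀ i < m, rnd G S (c i) < rnd G S (c (i + 1))) from h _ v le_rfl
  intro n
  induction n with
  | zero =>
    intro v hv
    have h0 : rnd G S v = 0 := by omega
    have hvS : v ∈ S := by
      have := mem_rnd G S hS v
      rw [h0] at this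
      simpa using this
    exact ⟨0, fun _ => v, rfl, hvS, by omega, by omega⟩
  | succ n ih =>
    intro v hv
    by_cases hvS : v ∈ S
    · exact ⟨0, fun _ => v, rfl, hvS, by omega, by omega⟩
    · have h1 : 1 ≤ rnd G S v := by
        by_contra h
        have h0 : rnd G S v = 0 := by omega
        have := mem_rnd G S hS v
        rw [h0] at this
        exact hvS (by simpa using this)
      have hvmem := mem_rnd G S hS v
      have hnot : v ∉ (psdStep G)^[rnd G S v - 1] S := by
        intro hmem
        have := rnd_le G S hmem
        omega
      have heq : (psdStep G)^[rnd G S v] S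
          = psdStep G ((psdStep G)^[rnd G S v - 1] S) := by
        conv_lhs => rw [show rnd G S v = (rnd G S v - 1) + 1 by omega]
        rw [Function.iterate_succ_apply']
      rw [heq] at hvmem
      rcases hvmem with h | h
      · exact absurd h hnot
      · obtain ⟨u, huB, -, hadj, -⟩ := h
        have hru : rnd G S u ≤ rnd G S v - 1 := rnd_le G S huB
        obtain ⟨m, c, hcm, hc0, hadjc, hmono⟩ := ih u (by omega)
        refine ⟨m + 1, fun i => if i ≤ m then c i else v, ?_, ?_, ?_, ?_⟩
        · simp
        · simpa using hc0
        · intro i hi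
          rcases Nat.lt_or_ge i m with h' | h'
          · simpa [Nat.le_of_lt h', Nat.succ_le_of_lt h'] using hadjc i h'
          · have him : i = m := by omega
            subst him
            simpa [hcm] using hadj
        · intro i hi
          rcases Nat.lt_or_ge i m with h' | h'
          · simpa [Nat.le_of_lt h', Nat.succ_le_of_lt h'] using hmono i h'
          · have him : i = m := by omega
            subst him
            simp [hcm]
            omega

end Aux

/-- In a graph of max degree ≤ 2, three neighbors with two distinctness facts coincide. -/
lemma nbr_eq {V : Type*} [Fintype V] [DecidableEq V] (G : SimpleGraph V)
    [DecidableRel G.Adj] {x a b c : V} (h2 : G.degree x ≤ 2)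
    (ha : G.Adj x a) (hb : G.Adj x b) (hc : G.Adj x c)
    (hab : a ≠ b) (hac : a ≠ c) : b = c := by
  by_contra hbc
  have hsub : ({a, b, c} : Finset V) ⊆ G.neighborFinset x := by
    intro y hy
    simp only [Finset.mem_insert, Finset.mem_singleton] at hy
    rcases hy with rfl | rfl | rfl <;> simpa [SimpleGraph.mem_neighborFinset]
  have hcard : ({a, b, c} : Finset V).card = 3 := by
    rw [Finset.card_insert_of_notMem (by simp [hab, hac]),
      Finset.card_insert_of_notMem (by simp [hbc]), Finset.card_singleton]
  have := Finset.card_le_card hsub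
  rw [hcard] at this
  have hdeg : (G.neighborFinset x).card = G.degree x := rfl
  omega

theorem stmt_4 {V : Type*} [Fintype V] (G : SimpleGraph V) [DecidableRel G.Adj]
    (hΔ : G.maxDegree = 2) (S : Finset V) (hS : IsPSDForcingSet G ↑S) :
    Fintype.card V ≤ S.card * (1 + 2 * psdPt G ↑S) := by
  classical
  set t0 := psdPt G ↑S with ht0def
  have ht0 : (psdStep G)^[t0] (↑S : Set V) = Set.univ := Nat.sInf_mem hS
  set r : V → ℕ := rnd G (↑S : Set V) with hrdef
  choose m c hend hstart hadjc hmonoc using fun v => chain_exists G (↑S : Set V) hS v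
  -- basic facts
  have hrS : ∀ v : V, v ∉ S → 1 ≤ r v := by
    intro v hv
    by_contra h
    have h0 : r v = 0 := by omega
    have := mem_rnd G (↑S : Set V) hS v
    rw [← hrdef, h0] at this
    exact hv (by simpa using this)
  have hrle : ∀ v : V, r v ≤ t0 := by
    intro v
    exact rnd_le G (↑S : Set V) (by rw [ht0]; trivial)
  have hm1 : ∀ v : V, v ∉ S → 1 ≤ m v := by
    intro v hv
    by_contra h
    have h0 : m v = 0 := by omega
    have hst := hstart v
    have he := hend v
    rw [h0] at he
    exact hv (by rw [← he]; exact_mod_cast hst)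
  have hrmono : ∀ v : V, ∀ j, ∀ i < j, j ≤ m v → r (c v i) < r (c v j) := by
    intro v j
    induction j with
    | zero => omega
    | succ j ih =>
      intro i hij hj
      rcases Nat.lt_or_ge i j with h' | h'
      · exact (ih i h' (by omega)).trans (hmonoc v j (by omega))
      · have : i = j := by omega
        subst this
        exact hmonoc v i (by omega)
  -- the key injection argument
  have main : ∀ v w : V, v ∉ S → w ∉ S → c v 0 = c w 0 → c v 1 = c w 1 →
      r v = r w → m v ≤ m w → v = w := by
    intro v w hv hw h0 h1e hrvw hm
    have key : ∀ i, i ≤ m v → c v i = c w i := by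
      intro i
      induction i using Nat.strong_induction_on with
      | _ i ih =>
        match i with
        | 0 => intro _; exact h0
        | 1 => intro _; exact h1e
        | (i + 2) =>
          intro hi
          have e0 : c v i = c w i := ih i (by omega) (by omega)
          have e1 : c v (i + 1) = c w (i + 1) := ih (i + 1) (by omega) (by omega)
          have hdeg : G.degree (c v (i + 1)) ≤ 2 := by
            rw [← hΔ]; exact G.degree_le_maxDegree _
          have ha : G.Adj (c v (i + 1)) (c v i) := (hadjc v i (by omega)).symm
          have hb : G.Adj (c v (i + 1)) (c v (i + 2)) := hadjc v (i + 1) (by omega)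
          have hcadj : G.Adj (c v (i + 1)) (c w (i + 2)) := by
            rw [e1]; exact hadjc w (i + 1) (by omega)
          have hab : c v i ≠ c v (i + 2) := by
            intro h
            have := hrmono v (i + 2) i (by omega) hi
            rw [h] at this; omega
          have hac : c v i ≠ c w (i + 2) := by
            intro h
            have := hrmono w (i + 2) i (by omega) (by omega)
            rw [← e0, ← h] at this; omega
          exact nbr_eq G hdeg ha hb hcadj hab hac
    have hveq : v = c w (m v) := by rw [← key (m v) le_rfl, hend v]
    rcases Nat.lt_or_ge (m v) (m w) with hlt | hge
    · exfalso
      have hlt2 : r (c w (m v)) < r (c w (m w)) := hrmono w (m w) (m v) hlt le_rfl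
      rw [hend w, ← hveq] at hlt2
      omega
    · have : m v = m w := by omega
      rw [this] at hveq
      rw [hveq, hend w]
  -- define the injection
  set f : V → V × V × ℕ :=
    fun v => if v ∈ S then (v, v, 0) else (c v 0, c v 1, r v) with hfdef
  have hinj : Function.Injective f := by
    intro v w hvw
    by_cases hv : v ∈ S <;> by_cases hw : w ∈ S
    · simp only [hfdef, if_pos hv, if_pos hw, Prod.mk.injEq] at hvw
      exact hvw.1
    · exfalso
      simp only [hfdef, if_pos hv, if_neg hw, Prod.mk.injEq] at hvw
      have := hrS w hw
      omega
    · exfalso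
      simp only [hfdef, if_neg hv, if_pos hw, Prod.mk.injEq] at hvw
      have := hrS v hv
      omega
    · simp only [hfdef, if_neg hv, if_neg hw, Prod.mk.injEq] at hvw
      obtain ⟨h0, h1e, hrvw⟩ := hvw
      rcases le_total (m v) (m w) with h | h
      · exact main v w hv hw h0 h1e hrvw h
      · exact (main w v hw hv h0.symm h1e.symm hrvw.symm h).symm
  -- the target finset
  set T : Finset (V × V × ℕ) :=
    S.biUnion (fun a =>
      insert (a, a, 0)
        ((G.neighborFinset a ×ˢ Finset.Icc 1 t0).image (fun p => (a, p.1, p.2))))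
    with hTdef
  have hmaps : ∀ v : V, v ∈ Finset.univ → f v ∈ T := by
    intro v _
    by_cases hv : v ∈ S
    · rw [hTdef]
      refine Finset.mem_biUnion.mpr ⟨v, hv, ?_⟩
      simp [hfdef, if_pos hv]
    · rw [hTdef]
      refine Finset.mem_biUnion.mpr ⟨c v 0, by exact_mod_cast hstart v, ?_⟩
      refine Finset.mem_insert_of_mem ?_
      refine Finset.mem_image.mpr ⟨(c v 1, r v), ?_, ?_⟩
      · refine Finset.mem_product.mpr ⟨?_, ?_⟩
        · rw [SimpleGraph.mem_neighborFinset]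
          exact hadjc v 0 (by have := hm1 v hv; omega)
        · exact Finset.mem_Icc.mpr ⟨hrS v hv, hrle v⟩
      · simp [hfdef, if_neg hv]
  have hcard1 : Fintype.card V ≤ T.card := by
    rw [← Finset.card_univ]
    exact Finset.card_le_card_of_injOn f hmaps (hinj.injOn)
  have hcard2 : T.card ≤ S.card * (1 + 2 * t0) := by
    calc T.card ≤ ∑ a ∈ S, (insert (a, a, 0)
        ((G.neighborFinset a ×ˢ Finset.Icc 1 t0).image
          (fun p => (a, p.1, p.2)))).card := Finset.card_biUnion_le
      _ ≤ ∑ _a ∈ S, (1 + 2 * t0) := by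
          refine Finset.sum_le_sum ?_
          intro a _
          have h1 : (insert (a, a, 0)
              ((G.neighborFinset a ×ˢ Finset.Icc 1 t0).image
                (fun p => (a, p.1, p.2)))).card
              ≤ ((G.neighborFinset a ×ˢ Finset.Icc 1 t0).image
                (fun p => (a, p.1, p.2))).card + 1 := Finset.card_insert_le _ _
          have h2 : ((G.neighborFinset a ×ˢ Finset.Icc 1 t0).image
              (fun p => (a, p.1, p.2))).card
              ≤ (G.neighborFinset a ×ˢ Finset.Icc 1 t0).card :=
            Finset.card_image_le
          have h3 : (G.neighborFinset a ×ˢ Finset.Icc 1 t0).card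
              = G.degree a * t0 := by
            rw [Finset.card_product, Nat.card_Icc]
            rfl
          have h4 : G.degree a ≤ 2 := by
            rw [← hΔ]; exact G.degree_le_maxDegree _
          have h5 : G.degree a * t0 ≤ 2 * t0 := Nat.mul_le_mul_right _ h4
          omega
      _ = S.card * (1 + 2 * t0) := by
          rw [Finset.sum_const, smul_eq_mul]
  exact hcard1.trans hcard2
end

section
/- Let G be a graph of order n with maximum degree Δ = Δ(G) ≥ 3 and let S be a positive semidefinite zero forcing set with propagation time p = pt₊(G;S). Then n ≤ |S|·(1 + (Δ·(Δ−1)^p − Δ)/(Δ − 2)). -/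
open SimpleGraph

namespace PSDAux

section Basic

variable {V : Type*} (G : SimpleGraph V) (S : Set V)

/-- Blue set after `t` rounds. -/
def Bset (t : ℕ) : Set V := (psdStep G)^[t] S

lemma Bset_mono {s t : ℕ} (h : s ≤ t) : Bset G S s ⊆ Bset G S t := by
  induction t with
  | zero => simpa [Nat.le_zero.mp h]
  | succ t ih =>
    rcases Nat.lt_or_ge s (t+1) with h' | h'
    · intro v hv
      have : v ∈ Bset G S t := ih (Nat.lt_succ_iff.mp h') hv
      rw [Bset, Function.iterate_succ_apply']
      exact Or.inl this
    · have : s = t + 1 := le_antisymm h h'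
      subst this; exact fun v hv => hv

/-- Round at which `v` becomes blue. -/
noncomputable def rk (v : V) : ℕ := sInf {t | v ∈ Bset G S t}

lemma notMem_Bset_of_lt' {v : V} {t : ℕ} (h : t < rk G S v) : v ∉ Bset G S t :=
  Nat.notMem_of_lt_sInf h

open scoped Classical in
/-- The forcer (parent) of a vertex in the forcing forest. -/
noncomputable def par (v : V) : V :=
  if h : ∃ u, psdForces G (Bset G S (rk G S v - 1)) u v then h.choose else v

/-- Depth in the forcing forest, computed with fuel. -/
noncomputable def dAux [DecidablePred (· ∈ S)] : ℕ → V → ℕ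
  | 0, _ => 0
  | (n+1), v => if v ∈ S then 0 else dAux n (par G S v) + 1

noncomputable def dep [DecidablePred (· ∈ S)] (v : V) : ℕ := dAux G S (rk G S v) v

variable (hS : IsPSDForcingSet G S)
include hS

lemma Bset_pt : Bset G S (psdPt G S) = Set.univ :=
  Nat.sInf_mem hS


lemma rk_le_pt (v : V) : rk G S v ≤ psdPt G S := by
  apply Nat.sInf_le
  show v ∈ Bset G S (psdPt G S)
  rw [Bset_pt G S hS]; trivial

lemma mem_Bset_rk (v : V) : v ∈ Bset G S (rk G S v) := by
  have h : rk G S v ∈ {t | v ∈ Bset G S t} :=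
    Nat.sInf_mem ⟨psdPt G S, show v ∈ Bset G S (psdPt G S) by rw [Bset_pt G S hS]; trivial⟩
  exact h

lemma rk_eq_zero_iff {v : V} : rk G S v = 0 ↔ v ∈ S := by
  constructor
  · intro h
    have := mem_Bset_rk G S hS v
    rwa [h] at this
  · intro h
    exact Nat.le_zero.mp (Nat.sInf_le h)

lemma exists_forcer {v : V} (hv : v ∉ S) :
    ∃ u, psdForces G (Bset G S (rk G S v - 1)) u v := by
  have hr : rk G S v ≠ 0 := fun h => hv ((rk_eq_zero_iff G S hS).mp h)
  have h1 : rk G S v = (rk G S v - 1) + 1 := (Nat.succ_pred_eq_of_pos (Nat.pos_of_ne_zero hr)).symm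
  have hmem : v ∈ Bset G S ((rk G S v - 1) + 1) := h1 ▸ mem_Bset_rk G S hS v
  have hnot : v ∉ Bset G S (rk G S v - 1) :=
    notMem_Bset_of_lt' G S (by omega)
  rw [Bset, Function.iterate_succ_apply'] at hmem
  rcases hmem with h | h
  · exact absurd h hnot
  · exact h

open scoped Classical in
lemma par_spec {v : V} (hv : v ∉ S) :
    psdForces G (Bset G S (rk G S v - 1)) (par G S v) v := by
  have h := exists_forcer G S hS hv
  rw [par, dif_pos h]
  exact h.choose_spec

lemma adj_par {v : V} (hv : v ∉ S) : G.Adj (par G S v) v :=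
  (par_spec G S hS hv).2.2.1

lemma rk_par_lt {v : V} (hv : v ∉ S) : rk G S (par G S v) < rk G S v := by
  have hmem : par G S v ∈ Bset G S (rk G S v - 1) := (par_spec G S hS hv).1
  have h1 : rk G S (par G S v) ≤ rk G S v - 1 := Nat.sInf_le hmem
  have hr : rk G S v ≠ 0 := fun h => hv ((rk_eq_zero_iff G S hS).mp h)
  omega

variable [DecidablePred (· ∈ S)]

lemma dAux_stable : ∀ n, ∀ v : V, rk G S v ≤ n → dAux G S n v = dep G S v := by
  intro n
  induction n using Nat.strong_induction_on with
  | _ n ih =>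
    intro v hn
    by_cases hv : v ∈ S
    · have h0 : rk G S v = 0 := (rk_eq_zero_iff G S hS).mpr hv
      rw [dep, h0]
      cases n with
      | zero => rfl
      | succ n => simp [dAux, hv]
    · have hr : rk G S v ≠ 0 := fun h => hv ((rk_eq_zero_iff G S hS).mp h)
      have hn1 : n ≠ 0 := by omega
      obtain ⟨m, rfl⟩ : ∃ m, n = m + 1 := ⟨n - 1, by omega⟩
      have hrp : rk G S (par G S v) < rk G S v := rk_par_lt G S hS hv
      rw [dep]
      obtain ⟨k, hk⟩ : ∃ k, rk G S v = k + 1 := ⟨rk G S v - 1, by omega⟩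
      rw [hk]
      simp only [dAux, if_neg hv]
      have e1 : dAux G S m (par G S v) = dep G S (par G S v) :=
        ih m (by omega) _ (by omega)
      have e2 : dAux G S k (par G S v) = dep G S (par G S v) :=
        ih k (by omega) _ (by omega)
      rw [e1, e2]

lemma dep_eq_zero_iff {v : V} : dep G S v = 0 ↔ v ∈ S := by
  constructor
  · intro h
    by_contra hv
    have hr : rk G S v ≠ 0 := fun h0 => hv ((rk_eq_zero_iff G S hS).mp h0)
    obtain ⟨k, hk⟩ : ∃ k, rk G S v = k + 1 := ⟨rk G S v - 1, by omega⟩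
    rw [dep, hk] at h
    simp [dAux, if_neg hv] at h
  · intro hv
    have h0 : rk G S v = 0 := (rk_eq_zero_iff G S hS).mpr hv
    rw [dep, h0]; rfl

lemma dep_par {v : V} (hv : v ∉ S) : dep G S v = dep G S (par G S v) + 1 := by
  have hr : rk G S v ≠ 0 := fun h => hv ((rk_eq_zero_iff G S hS).mp h)
  obtain ⟨k, hk⟩ : ∃ k, rk G S v = k + 1 := ⟨rk G S v - 1, by omega⟩
  rw [dep, hk]
  simp only [dAux, if_neg hv]
  congr 1
  exact dAux_stable G S hS k _ (by have := rk_par_lt G S hS hv; omega)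

lemma dep_le_rk (v : V) : dep G S v ≤ rk G S v := by
  generalize h : rk G S v = n
  induction n using Nat.strong_induction_on generalizing v with
  | _ n ih =>
    by_cases hv : v ∈ S
    · rw [(dep_eq_zero_iff G S hS).mpr hv]; omega
    · have hrp : rk G S (par G S v) < rk G S v := rk_par_lt G S hS hv
      rw [dep_par G S hS hv]
      have := ih (rk G S (par G S v)) (by omega) (par G S v) rfl
      omega


end Basic

section Counting

variable {V : Type*} [Fintype V] [DecidableEq V] (G : SimpleGraph V) [DecidableRel G.Adj]
  (S : Set V) [DecidablePred (· ∈ S)]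

/-- Vertices at depth `k` in the forcing forest. -/
noncomputable def Fk (k : ℕ) : Finset V := Finset.univ.filter (fun v => dep G S v = k)

variable (hS : IsPSDForcingSet G S)
include hS

lemma notMem_of_dep_succ {v : V} {k : ℕ} (h : dep G S v = k + 1) : v ∉ S := by
  intro hv
  rw [(dep_eq_zero_iff G S hS).mpr hv] at h
  omega

lemma card_fiber_le_deg (k : ℕ) (u : V) :
    ((Fk G S (k+1)).filter (fun v => par G S v = u)).card ≤ G.degree u := by
  rw [← card_neighborFinset_eq_degree]
  apply Finset.card_le_card
  intro v hv
  simp only [Fk, Finset.mem_filter, Finset.mem_univ, true_and] at hv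
  obtain ⟨hd, hpar⟩ := hv
  rw [mem_neighborFinset, ← hpar]
  exact adj_par G S hS (notMem_of_dep_succ G S hS hd)

lemma card_fiber_le_deg_sub (k : ℕ) (u : V) (hu : u ∉ S) :
    ((Fk G S (k+1)).filter (fun v => par G S v = u)).card ≤ G.degree u - 1 := by
  have hparu : par G S u ∈ G.neighborFinset u := by
    rw [mem_neighborFinset]
    exact (adj_par G S hS hu).symm
  have hsub : (Fk G S (k+1)).filter (fun v => par G S v = u) ⊆
      (G.neighborFinset u).erase (par G S u) := by
    intro v hv
    simp only [Fk, Finset.mem_filter, Finset.mem_univ, true_and] at hv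
    obtain ⟨hd, hpar⟩ := hv
    have hvS : v ∉ S := notMem_of_dep_succ G S hS hd
    rw [Finset.mem_erase, mem_neighborFinset]
    refine ⟨?_, by rw [← hpar]; exact adj_par G S hS hvS⟩
    intro hveq
    have h1 : rk G S (par G S u) < rk G S u := rk_par_lt G S hS hu
    have h2 : rk G S (par G S v) < rk G S v := rk_par_lt G S hS hvS
    rw [hpar, hveq] at h2
    omega
  calc ((Fk G S (k+1)).filter (fun v => par G S v = u)).card
      ≤ ((G.neighborFinset u).erase (par G S u)).card := Finset.card_le_card hsub
    _ = G.degree u - 1 := by rw [Finset.card_erase_of_mem hparu, card_neighborFinset_eq_degree]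

lemma par_mem_Fk {v : V} {k : ℕ} (h : dep G S v = k + 1) : par G S v ∈ Fk G S k := by
  have hvS : v ∉ S := notMem_of_dep_succ G S hS h
  have := dep_par G S hS hvS
  simp only [Fk, Finset.mem_filter, Finset.mem_univ, true_and]
  omega

lemma card_Fk_succ_le (k : ℕ) :
    (Fk G S (k+1)).card ≤ (Fk G S k).card * G.maxDegree := by
  rw [Finset.card_eq_sum_card_fiberwise (f := par G S) (t := Fk G S k)
    (fun v hv => par_mem_Fk G S hS (by simpa [Fk] using hv))]
  calc ∑ u ∈ Fk G S k, ((Fk G S (k+1)).filter (fun v => par G S v = u)).card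
      ≤ ∑ _u ∈ Fk G S k, G.maxDegree := by
        apply Finset.sum_le_sum
        intro u _
        exact le_trans (card_fiber_le_deg G S hS k u) (G.degree_le_maxDegree u)
    _ = (Fk G S k).card * G.maxDegree := by rw [Finset.sum_const, smul_eq_mul]

lemma card_Fk_succ2_le (k : ℕ) :
    (Fk G S (k+2)).card ≤ (Fk G S (k+1)).card * (G.maxDegree - 1) := by
  rw [Finset.card_eq_sum_card_fiberwise (f := par G S) (t := Fk G S (k+1))
    (fun v hv => par_mem_Fk G S hS (by simpa [Fk] using hv))]
  calc ∑ u ∈ Fk G S (k+1), ((Fk G S (k+2)).filter (fun v => par G S v = u)).card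
      ≤ ∑ _u ∈ Fk G S (k+1), (G.maxDegree - 1) := by
        apply Finset.sum_le_sum
        intro u hu
        have huS : u ∉ S := notMem_of_dep_succ G S hS (by simpa [Fk] using hu)
        exact le_trans (card_fiber_le_deg_sub G S hS (k+1) u huS)
          (Nat.sub_le_sub_right (G.degree_le_maxDegree u) 1)
    _ = (Fk G S (k+1)).card * (G.maxDegree - 1) := by rw [Finset.sum_const, smul_eq_mul]

lemma Fk_zero : Fk G S 0 = S.toFinset := by
  ext v
  simp [Fk, dep_eq_zero_iff G S hS, Set.mem_toFinset]

lemma card_Fk_bound (k : ℕ) :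
    (Fk G S (k+1)).card ≤ S.toFinset.card * G.maxDegree * (G.maxDegree - 1)^k := by
  induction k with
  | zero =>
    have := card_Fk_succ_le G S hS 0
    rw [Fk_zero G S hS] at this
    simpa using this
  | succ k ih =>
    calc (Fk G S (k+2)).card ≤ (Fk G S (k+1)).card * (G.maxDegree - 1) :=
          card_Fk_succ2_le G S hS k
      _ ≤ S.toFinset.card * G.maxDegree * (G.maxDegree - 1)^k * (G.maxDegree - 1) :=
          Nat.mul_le_mul_right _ ih
      _ = S.toFinset.card * G.maxDegree * (G.maxDegree - 1)^(k+1) := by ring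

lemma card_V_le :
    Fintype.card V ≤ S.toFinset.card +
      ∑ k ∈ Finset.range (psdPt G S), S.toFinset.card * G.maxDegree * (G.maxDegree - 1)^k := by
  have hfib : ∀ v ∈ (Finset.univ : Finset V), dep G S v ∈ Finset.range (psdPt G S + 1) := by
    intro v _
    rw [Finset.mem_range]
    have h1 := dep_le_rk G S hS v
    have h2 := rk_le_pt G S hS v
    omega
  have hcard : Fintype.card V = ∑ k ∈ Finset.range (psdPt G S + 1), (Fk G S k).card := by
    rw [← Finset.card_univ, Finset.card_eq_sum_card_fiberwise hfib]
    rfl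
  rw [hcard, Finset.sum_range_succ']
  rw [Fk_zero G S hS, add_comm]
  gcongr with k _
  exact card_Fk_bound G S hS k

end Counting

end PSDAux

theorem stmt_5 {V : Type*} [Fintype V] (G : SimpleGraph V) [DecidableRel G.Adj]
    (Δ : ℕ) (hΔ : G.maxDegree = Δ) (hΔ3 : 3 ≤ Δ)
    (S : Finset V) (hS : IsPSDForcingSet G ↑S) (p : ℕ) (hp : p = psdPt G ↑S) :
    (Fintype.card V : ℝ) ≤
      (S.card : ℝ) * (1 + ((Δ : ℝ) * ((Δ : ℝ) - 1) ^ p - Δ) / ((Δ : ℝ) - 2)) := by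
  classical
  have key := PSDAux.card_V_le G (↑S : Set V) hS
  simp only [Finset.toFinset_coe, hΔ, ← hp] at key
  have h3 : (3:ℝ) ≤ (Δ:ℝ) := by exact_mod_cast hΔ3
  have hΔ2 : (Δ:ℝ) - 2 ≠ 0 := by linarith
  have hx1 : (Δ:ℝ) - 1 ≠ 1 := by linarith
  have hcast : (Fintype.card V : ℝ) ≤
      (S.card : ℝ) + (S.card : ℝ) * Δ * ∑ k ∈ Finset.range p, ((Δ:ℝ) - 1)^k := by
    calc (Fintype.card V : ℝ)
        ≤ ((S.card + ∑ k ∈ Finset.range p, S.card * Δ * (Δ - 1)^k : ℕ) : ℝ) := by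
          exact_mod_cast key
      _ = (S.card : ℝ) + (S.card : ℝ) * Δ * ∑ k ∈ Finset.range p, ((Δ:ℝ) - 1)^k := by
          push_cast [Nat.cast_sub (show 1 ≤ Δ by omega), Finset.mul_sum]
          rfl
  have hsum : ∑ k ∈ Finset.range p, ((Δ:ℝ) - 1)^k
      = (((Δ:ℝ) - 1)^p - 1) / (((Δ:ℝ) - 1) - 1) := geom_sum_eq hx1 p
  rw [hsum] at hcast
  refine le_trans hcast (le_of_eq ?_)
  have h21 : ((Δ:ℝ) - 1) - 1 = (Δ:ℝ) - 2 := by ring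
  rw [h21]
  field_simp
end

section
/- Let G be a connected graph of order n with independence number α(G). Then th₊(G) ≤ n − α(G) + 1. -/
open SimpleGraph

/-- The independence number of a graph on a finite vertex type. -/
noncomputable def indepNumber {V : Type*} [Fintype V] (G : SimpleGraph V) : ℕ :=
  sSup {k | ∃ A : Finset V, A.card = k ∧ ∀ a ∈ A, ∀ b ∈ A, a ≠ b → ¬ G.Adj a b}

/-
If `A` is a maximum independent set of a connected graph on at least two vertices, colour
`S = V ∖ A` blue. The white vertices are pairwise non-adjacent, so every white component is a
single vertex, and any blue neighbour of a white vertex forces it. Hence `S` turns everything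
blue in one round and `th₊(G) ≤ |S| + 1 = n - α(G) + 1`. On at most one vertex, take `S = V`.
-/

section

variable {V : Type*} (G : SimpleGraph V)

lemma offReach_eq_of_isIndepSet_compl {B : Set V} (hB : G.IsIndepSet Bᶜ) {u w : V}
    (h : offReach G B u w) : u = w := by
  rcases Relation.ReflTransGen.cases_head h with huw | ⟨c, ⟨hadj, hu, hc⟩, -⟩
  · exact huw
  · exact absurd hadj (hB hu hc (G.ne_of_adj hadj))

lemma psdForces_of_isIndepSet_compl {B : Set V} (hB : G.IsIndepSet Bᶜ) {v w : V}
    (hv : v ∈ B) (hw : w ∉ B) (hvw : G.Adj v w) : psdForces G B v w :=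
  ⟨hv, hw, hvw, fun _ _ _ h => offReach_eq_of_isIndepSet_compl G hB h⟩

lemma psdStep_eq_univ_of_isIndepSet_compl {B : Set V} (hB : G.IsIndepSet Bᶜ)
    (hadj : ∀ w, ∃ v, G.Adj w v) : psdStep G B = Set.univ := by
  refine Set.eq_univ_of_forall fun w => ?_
  by_cases hw : w ∈ B
  · exact Or.inl hw
  obtain ⟨v, hwv⟩ := hadj w
  have hv : v ∈ B := by_contra fun hv => hB hw hv (G.ne_of_adj hwv) hwv
  exact Or.inr ⟨v, psdForces_of_isIndepSet_compl G hB hv hw hwv.symm⟩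

variable [Fintype V]

lemma psdTh_le_card_add (S : Finset V) {t : ℕ} (ht : (psdStep G)^[t] S = Set.univ) :
    psdTh G ≤ S.card + t :=
  calc psdTh G ≤ S.card + psdPt G S := Nat.sInf_le ⟨S, ⟨t, ht⟩, rfl⟩
    _ ≤ S.card + t :=
      Nat.add_le_add_left (Nat.sInf_le (s := {t | (psdStep G)^[t] S = Set.univ}) ht) _

lemma exists_isIndepSet_card_eq_indepNumber :
    ∃ A : Finset V, G.IsIndepSet (A : Set V) ∧ A.card = indepNumber G := by
  obtain ⟨A, hAcard, hAind⟩ := Nat.sSup_mem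
    (s := {k | ∃ A : Finset V, A.card = k ∧ ∀ a ∈ A, ∀ b ∈ A, a ≠ b → ¬ G.Adj a b})
    ⟨0, ∅, rfl, by simp⟩ ⟨Fintype.card V, by rintro k ⟨A, rfl, -⟩; exact A.card_le_univ⟩
  exact ⟨A, hAind, hAcard⟩

end

theorem stmt_7 {V : Type*} [Fintype V] (G : SimpleGraph V) (hG : G.Connected) :
    psdTh G ≤ Fintype.card V - indepNumber G + 1 := by
  classical
  obtain ⟨A, hAind, hAcard⟩ := exists_isIndepSet_card_eq_indepNumber G
  rcases subsingleton_or_nontrivial V with hV | hV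
  · have hth := psdTh_le_card_add G Finset.univ (t := 0) (by simp)
    have hcard := Fintype.card_le_one_iff_subsingleton.mpr hV
    rw [Finset.card_univ] at hth
    omega
  · have hstep : psdStep G ↑Aᶜ = Set.univ :=
      psdStep_eq_univ_of_isIndepSet_compl G (by simpa using hAind)
        hG.preconnected.exists_adj_of_nontrivial
    have hth := psdTh_le_card_add G Aᶜ (t := 1) hstep
    rw [Finset.card_compl, hAcard] at hth
    omega
end

section
/- For every n ≥ 1, the positive semidefinite throttling number of the path Pₙ equals ⌈√(2n) − 1/2⌉. -/
open SimpleGraph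

lemma offReach_side {n : ℕ} {B : Set (Fin n)} {v a b : Fin n} (hv : v ∈ B)
    (h : offReach (pathGraph n) B a b) : (a.val < v.val ↔ b.val < v.val) := by
  induction h with
  | refl => exact Iff.rfl
  | @tail x y hab hxy ih =>
    obtain ⟨hadj, hxB, hyB⟩ := hxy
    rw [pathGraph_adj] at hadj
    have h1 : x.val ≠ v.val := fun h => hxB (by rw [Fin.ext_iff.mpr h]; exact hv)
    have h2 : y.val ≠ v.val := fun h => hyB (by rw [Fin.ext_iff.mpr h]; exact hv)
    omega

lemma psdStep_pathGraph (n : ℕ) (B : Set (Fin n)) :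
    psdStep (pathGraph n) B = B ∪ {w | ∃ v ∈ B, (pathGraph n).Adj v w} := by
  ext w
  simp only [psdStep, psdForces, Set.mem_union, Set.mem_setOf_eq]
  constructor
  · rintro (h | ⟨v, hv, _, hadj, _⟩)
    · exact Or.inl h
    · exact Or.inr ⟨v, hv, hadj⟩
  · rintro (h | ⟨v, hv, hadj⟩)
    · exact Or.inl h
    · by_cases hw : w ∈ B
      · exact Or.inl hw
      · refine Or.inr ⟨v, hv, hw, hadj, ?_⟩
        intro u hu hadj' hreach
        by_contra hne
        have hside := offReach_side hv hreach
        rw [pathGraph_adj] at hadj hadj'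
        have hne' : u.val ≠ w.val := by simpa [Fin.ext_iff] using hne
        omega

lemma iter_psdStep_pathGraph (n : ℕ) (S : Set (Fin n)) (t : ℕ) :
    (psdStep (pathGraph n))^[t] S
      = {w | ∃ v ∈ S, v.val ≤ w.val + t ∧ w.val ≤ v.val + t} := by
  induction t with
  | zero =>
    ext w
    simp only [Function.iterate_zero, id_eq, Set.mem_setOf_eq, Nat.add_zero]
    constructor
    · intro h; exact ⟨w, h, le_rfl, le_rfl⟩
    · rintro ⟨v, hv, h1, h2⟩
      have : v = w := Fin.ext (le_antisymm h1 h2)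
      rwa [← this]
  | succ t ih =>
    rw [Function.iterate_succ_apply', ih, psdStep_pathGraph]
    ext w
    simp only [Set.mem_union, Set.mem_setOf_eq, pathGraph_adj]
    constructor
    · rintro (⟨v, hv, h1, h2⟩ | ⟨u, ⟨s, hs, h1, h2⟩, hadj⟩)
      · exact ⟨v, hv, by omega, by omega⟩
      · exact ⟨s, hs, by omega, by omega⟩
    · rintro ⟨v, hv, h1, h2⟩
      by_cases hle : v.val ≤ w.val + t ∧ w.val ≤ v.val + t
      · exact Or.inl ⟨v, hv, hle.1, hle.2⟩
      · right
        rcases lt_or_ge w.val v.val with hlt | hge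
        · refine ⟨⟨w.val + 1, by omega⟩, ⟨v, hv, ?_, ?_⟩, ?_⟩
          · show v.val ≤ w.val + 1 + t; omega
          · show w.val + 1 ≤ v.val + t; omega
          · right; rfl
        · refine ⟨⟨w.val - 1, by omega⟩, ⟨v, hv, ?_, ?_⟩, ?_⟩
          · show v.val ≤ w.val - 1 + t; omega
          · show w.val - 1 ≤ v.val + t; omega
          · left; show w.val - 1 + 1 = w.val; omega

lemma path_count (n : ℕ) (S : Finset (Fin n)) (t : ℕ)
    (h : (psdStep (pathGraph n))^[t] ↑S = Set.univ) : n ≤ S.card * (2 * t + 1) := by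
  have hcov : ∀ w : Fin n, ∃ v ∈ S, v.val ≤ w.val + t ∧ w.val ≤ v.val + t := by
    intro w
    have hw : w ∈ (psdStep (pathGraph n))^[t] (↑S : Set (Fin n)) := h.symm ▸ Set.mem_univ w
    rw [iter_psdStep_pathGraph] at hw
    obtain ⟨v, hv, h1, h2⟩ := hw
    exact ⟨v, hv, h1, h2⟩
  have hsub : Finset.range n ⊆ S.biUnion (fun v => Finset.Icc (v.val - t) (v.val + t)) := by
    intro j hj
    rw [Finset.mem_range] at hj
    obtain ⟨v, hv, h1, h2⟩ := hcov ⟨j, hj⟩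
    have h1' : v.val ≤ j + t := h1
    have h2' : j ≤ v.val + t := h2
    simp only [Finset.mem_biUnion, Finset.mem_Icc]
    exact ⟨v, hv, by omega, by omega⟩
  calc n = (Finset.range n).card := (Finset.card_range n).symm
    _ ≤ _ := Finset.card_le_card hsub
    _ ≤ ∑ v ∈ S, (Finset.Icc (v.val - t) (v.val + t)).card := Finset.card_biUnion_le
    _ ≤ ∑ _v ∈ S, (2 * t + 1) := Finset.sum_le_sum (fun v _ => by rw [Nat.card_Icc]; omega)
    _ = S.card * (2 * t + 1) := by rw [Finset.sum_const, smul_eq_mul]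

lemma path_upper (n k t : ℕ) (hn : 1 ≤ n) (h : n ≤ k * (2 * t + 1)) :
    psdTh (pathGraph n) ≤ k + t := by
  set c : ℕ → Fin n := fun i => ⟨min (i * (2 * t + 1) + t) (n - 1), by omega⟩ with hc
  set S : Finset (Fin n) := (Finset.range k).image c with hS
  have hforce : (psdStep (pathGraph n))^[t] ↑S = Set.univ := by
    rw [iter_psdStep_pathGraph]
    ext w
    simp only [Set.mem_setOf_eq, Set.mem_univ, iff_true]
    set q := w.val / (2 * t + 1) with hq
    refine ⟨c q, ?_, ?_, ?_⟩
    · have hqk : q < k := by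
        rw [hq, Nat.div_lt_iff_lt_mul (by omega)]
        exact lt_of_lt_of_le w.isLt h
      simp only [hS, Finset.coe_image, Set.mem_image, Finset.mem_coe, Finset.mem_range]
      exact ⟨q, by simpa using hqk, rfl⟩
    · have hqr : (2 * t + 1) * q + w.val % (2 * t + 1) = w.val := Nat.div_add_mod _ _
      have hr : w.val % (2 * t + 1) < 2 * t + 1 := Nat.mod_lt _ (by omega)
      have hwn : w.val < n := w.isLt
      show min (q * (2 * t + 1) + t) (n - 1) ≤ w.val + t
      have hcomm : q * (2 * t + 1) = (2 * t + 1) * q := mul_comm _ _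
      omega
    · have hqr : (2 * t + 1) * q + w.val % (2 * t + 1) = w.val := Nat.div_add_mod _ _
      have hr : w.val % (2 * t + 1) < 2 * t + 1 := Nat.mod_lt _ (by omega)
      have hwn : w.val < n := w.isLt
      show w.val ≤ min (q * (2 * t + 1) + t) (n - 1) + t
      have hcomm : q * (2 * t + 1) = (2 * t + 1) * q := mul_comm _ _
      omega
  have hpt : psdPt (pathGraph n) ↑S ≤ t := Nat.sInf_le hforce
  have hcard : S.card ≤ k := le_trans (Finset.card_image_le) (by simp)
  have hmem : psdTh (pathGraph n) ≤ S.card + psdPt (pathGraph n) ↑S :=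
    Nat.sInf_le ⟨S, ⟨t, hforce⟩, rfl⟩
  omega

theorem stmt_9 (n : ℕ) (hn : 1 ≤ n) :
    (psdTh (SimpleGraph.pathGraph n) : ℤ) = ⌈Real.sqrt (2 * n) - 1 / 2⌉ := by
  set m : ℕ := sInf {m | 2 * n ≤ m * (m + 1)} with hm
  have hmemset : 2 * n ≤ m * (m + 1) :=
    Nat.sInf_mem (⟨2 * n, Nat.le_mul_of_pos_right _ (by omega)⟩ :
      {m | 2 * n ≤ m * (m + 1)}.Nonempty)
  have hmpos : 1 ≤ m := by
    by_contra h
    have : m = 0 := by omega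
    rw [this] at hmemset; omega
  have hmin : (m - 1) * ((m - 1) + 1) < 2 * n := by
    have := Nat.notMem_of_lt_sInf (s := {m | 2 * n ≤ m * (m + 1)}) (show m - 1 < m by omega)
    simpa [Set.mem_setOf_eq, Nat.not_le] using this
  -- upper bound: psdTh ≤ m
  have hub : psdTh (pathGraph n) ≤ m := by
    rcases Nat.even_or_odd m with ⟨a, ha⟩ | ⟨a, ha⟩
    · have hkt : n ≤ a * (2 * a + 1) := by
        rw [ha] at hmemset
        have hr : 2 * (a * (2 * a + 1)) = (a + a) * ((a + a) + 1) := by ring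
        omega
      have := path_upper n a a hn hkt
      omega
    · have hkt : n ≤ (a + 1) * (2 * a + 1) := by
        rw [ha] at hmemset
        have hr : 2 * ((a + 1) * (2 * a + 1)) = (2 * a + 1) * ((2 * a + 1) + 1) := by ring
        omega
      have := path_upper n (a + 1) a hn hkt
      omega
  -- lower bound: m ≤ psdTh
  have hlb : m ≤ psdTh (pathGraph n) := by
    have hne : {k | ∃ S : Finset (Fin n), IsPSDForcingSet (pathGraph n) ↑S ∧
        k = S.card + psdPt (pathGraph n) ↑S}.Nonempty := by
      refine ⟨_, Finset.univ, ⟨0, ?_⟩, rfl⟩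
      simp
    obtain ⟨S, hSf, hx⟩ := Nat.sInf_mem hne
    set t := psdPt (pathGraph n) ↑S with ht
    have htmem : (psdStep (pathGraph n))^[t] ↑S = Set.univ := Nat.sInf_mem hSf
    have hcount : n ≤ S.card * (2 * t + 1) := path_count n S t htmem
    have hScard : 1 ≤ S.card := by
      by_contra h
      have h0 : S.card = 0 := by omega
      rw [Finset.card_eq_zero] at h0
      have : (⟨0, hn⟩ : Fin n) ∈ (psdStep (pathGraph n))^[t] (↑S : Set (Fin n)) :=
        htmem.symm ▸ Set.mem_univ _
      rw [iter_psdStep_pathGraph] at this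
      obtain ⟨v, hv, -⟩ := this
      simp [h0] at hv
    set k := S.card with hk
    have hkey : 2 * n ≤ (k + t) * ((k + t) + 1) := by
      rcases le_total k t with hle | hle
      · obtain ⟨d, hd⟩ := Nat.exists_eq_add_of_le hle
        have hr : (k + (k + d)) * ((k + (k + d)) + 1)
            = 2 * (k * (2 * (k + d) + 1)) + d * d + d := by ring
        rw [hd] at hcount ⊢
        omega
      · obtain ⟨d, hd⟩ := Nat.exists_eq_add_of_le hle
        have hr : ((t + d) + t) * (((t + d) + t) + 1) + d
            = 2 * ((t + d) * (2 * t + 1)) + d * d := by ring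
        have hdd : d ≤ d * d := by
          rcases Nat.eq_zero_or_pos d with h0 | h0
          · simp [h0]
          · exact Nat.le_mul_of_pos_left d h0
        rw [hd] at hcount ⊢
        omega
    have hmkt : m ≤ k + t := Nat.sInf_le hkey
    have hpsd : psdTh (pathGraph n) = S.card + psdPt (pathGraph n) ↑S := hx
    omega
  have hEq : psdTh (pathGraph n) = m := le_antisymm hub hlb
  rw [hEq]
  symm
  rw [Int.ceil_eq_iff]
  constructor
  · have hm1 : (1 : ℝ) ≤ (m : ℝ) := by exact_mod_cast hmpos
    have h1 : ((m : ℝ) - 1 / 2) < Real.sqrt (2 * n) := by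
      rw [Real.lt_sqrt (by linarith)]
      obtain ⟨p, hp⟩ : ∃ p, m = p + 1 := ⟨m - 1, by omega⟩
      rw [hp] at hmin
      simp only [Nat.add_sub_cancel] at hmin
      have hmin2 : p * (p + 1) + 1 ≤ 2 * n := hmin
      have hR : ((p : ℝ) * (p + 1) + 1) ≤ 2 * n := by exact_mod_cast hmin2
      rw [hp]
      push_cast
      nlinarith [hR]
    push_cast
    linarith
  · have h2 : Real.sqrt (2 * n) ≤ (m : ℝ) + 1 / 2 := by
      rw [Real.sqrt_le_iff]
      have hR2 : (2 * n : ℝ) ≤ (m : ℝ) * ((m : ℝ) + 1) := by exact_mod_cast hmemset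
      constructor
      · positivity
      · nlinarith [hR2]
    push_cast
    linarith
end

section
/- If T is a tree on n ≥ 3 vertices, then there exists a set S ⊆ V(T) containing no leaves of T such that th₊(T) = |S| + pt₊(T;S). -/
open SimpleGraph

/-!
Among the PSD zero forcing sets attaining `th₊(T)`, take one containing as few leaves as possible.
If it contained a leaf `v` with neighbour `u`, replace `v` by `u`. When `u` was already blue, the
set shrinks by one vertex and `u` forces `v` in the first round, so the propagation time grows by at
most one. Otherwise the set keeps its size and, after one round, is at least as blue as the old set
after one round, since `v` gets forced at once and, having no white neighbour, never took part in a
force. Either way the throttling value does not increase, and since `u` is not a leaf when `n ≥ 3`,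
the number of leaves drops, a contradiction.
-/

section

variable {V : Type*} {G : SimpleGraph V}

theorem SimpleGraph.adj_of_neighborSet_eq_singleton {u v : V} (hN : G.neighborSet v = {u}) :
    G.Adj v u := by
  simp [← mem_neighborSet, hN]

theorem SimpleGraph.eq_of_neighborSet_eq_singleton {u v w : V} (hN : G.neighborSet v = {u})
    (hw : G.Adj v w) : w = u := by
  simpa [← mem_neighborSet, hN] using hw

section Forcing

variable {B B' : Set V}

theorem offReach.of_white_adj
    (hwhite : ∀ a b, G.Adj a b → a ∉ B' → b ∉ B' → a ∉ B ∧ b ∉ B) {a b : V}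
    (h : offReach G B' a b) : offReach G B a b :=
  Relation.ReflTransGen.mono (fun x y ⟨hxy, hx, hy⟩ => ⟨hxy, hwhite x y hxy hx hy⟩) a b h

theorem psdForces.of_white_adj {p w : V} (hf : psdForces G B p w) (hp : p ∈ B') (hw : w ∉ B')
    (hwhite : ∀ a b, G.Adj a b → a ∉ B' → b ∉ B' → a ∉ B ∧ b ∉ B) : psdForces G B' p w := by
  obtain ⟨-, -, hpw, huniq⟩ := hf
  refine ⟨hp, hw, hpw, fun z hz hpz hzw => ?_⟩
  rcases hzw.cases_head with rfl | ⟨c, ⟨hzc, -, hc⟩, -⟩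
  · rfl
  · exact huniq z (hwhite z c hzc hz hc).1 hpz (offReach.of_white_adj hwhite hzw)

theorem psdForces.mono (h : B ⊆ B') {p w : V} (hf : psdForces G B p w) (hw : w ∉ B') :
    psdForces G B' p w :=
  hf.of_white_adj (h hf.1) hw fun _ _ _ ha hb => ⟨fun ha' => ha (h ha'), fun hb' => hb (h hb')⟩

variable (G) in
theorem psdStep_mono : Monotone (psdStep G) := by
  rintro B B' h x (hx | ⟨p, hf⟩)
  · exact Or.inl (h hx)
  · by_cases hx' : x ∈ B'
    · exact Or.inl hx'
    · exact Or.inr ⟨p, hf.mono h hx'⟩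

theorem subset_psdStep : B ⊆ psdStep G B := Set.subset_union_left

theorem psdForces_of_neighborSet_eq {u v : V} (hN : G.neighborSet v = {u}) (hu : u ∈ B)
    (hv : v ∉ B) : psdForces G B u v := by
  refine ⟨hu, hv, (adj_of_neighborSet_eq_singleton hN).symm, fun z hz _ hzv => ?_⟩
  rcases hzv.cases_tail with rfl | ⟨c, -, hcv, hc, -⟩
  · rfl
  · exact absurd (eq_of_neighborSet_eq_singleton hN hcv.symm ▸ hu) hc

theorem psdStep_subset_psdStep_insert_diff {u v : V} (hN : G.neighborSet v = {u}) :
    psdStep G B ⊆ psdStep G (insert u (B \ {v})) := by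
  set B' := insert u (B \ {v})
  have hnbr : ∀ c, G.Adj v c → c = u := fun c => eq_of_neighborSet_eq_singleton hN
  have hvB' : v ∉ B' := by
    rintro (h | ⟨-, h⟩)
    · exact (adj_of_neighborSet_eq_singleton hN).ne h
    · exact h rfl
  have hwhite_of : ∀ a b, G.Adj a b → b ∉ B' → a ∉ B' → a ∉ B := by
    intro a b hab hb ha haB
    by_cases hav : a = v
    · exact hb (Or.inl (hnbr b (hav ▸ hab)))
    · exact ha (Or.inr ⟨haB, hav⟩)
  have hwhite : ∀ a b, G.Adj a b → a ∉ B' → b ∉ B' → a ∉ B ∧ b ∉ B := fun a b hab ha hb =>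
    ⟨hwhite_of a b hab hb ha, hwhite_of b a hab.symm ha hb⟩
  rintro x (hx | ⟨p, hf⟩)
  · by_cases hxv : x = v
    · exact Or.inr ⟨u, hxv ▸ psdForces_of_neighborSet_eq hN (Set.mem_insert u _) hvB'⟩
    · exact Or.inl (Or.inr ⟨hx, hxv⟩)
  · by_cases hx' : x ∈ B'
    · exact Or.inl hx'
    have hpv : p ≠ v := fun hpv => hx' (Or.inl (hnbr x (hpv ▸ hf.2.2.1)))
    exact Or.inr ⟨p, hf.of_white_adj (Or.inr ⟨hf.1, hpv⟩) hx' hwhite⟩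

end Forcing

section PropagationTime

variable {S S' : Set V}

theorem psdPt_spec (hS : IsPSDForcingSet G S) : (psdStep G)^[psdPt G S] S = Set.univ :=
  Nat.sInf_mem hS

theorem psdPt_le {t : ℕ} (h : (psdStep G)^[t] S = Set.univ) : psdPt G S ≤ t :=
  Nat.sInf_le h

theorem psdPt_pos (hS : IsPSDForcingSet G S) {u : V} (hu : u ∉ S) : 0 < psdPt G S := by
  refine Nat.pos_of_ne_zero fun h0 => hu ?_
  have h := psdPt_spec hS
  rw [h0, Function.iterate_zero, id] at h
  exact h ▸ Set.mem_univ u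

theorem IsPSDForcingSet.of_iterate_subset {a b : ℕ} (hS : IsPSDForcingSet G S)
    (h : (psdStep G)^[a] S ⊆ (psdStep G)^[b] S') (ha : a ≤ psdPt G S) :
    IsPSDForcingSet G S' ∧ psdPt G S' + a ≤ psdPt G S + b := by
  have huniv : (psdStep G)^[psdPt G S - a + b] S' = Set.univ := by
    refine Set.eq_univ_of_univ_subset ?_
    calc Set.univ = (psdStep G)^[psdPt G S - a] ((psdStep G)^[a] S) := by
          rw [← Function.iterate_add_apply, Nat.sub_add_cancel ha, psdPt_spec hS]
      _ ⊆ (psdStep G)^[psdPt G S - a] ((psdStep G)^[b] S') := (psdStep_mono G).iterate _ h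
      _ = (psdStep G)^[psdPt G S - a + b] S' := (Function.iterate_add_apply _ _ _ _).symm
  have := psdPt_le huniv
  exact ⟨⟨_, huniv⟩, by omega⟩

theorem IsPSDForcingSet.insert_erase [DecidableEq V] {S : Finset V} {u v : V}
    (hN : G.neighborSet v = {u}) (hv : v ∈ S) (hS : IsPSDForcingSet G ↑S) :
    IsPSDForcingSet G ↑(insert u (S.erase v)) ∧
      (insert u (S.erase v)).card + psdPt G ↑(insert u (S.erase v)) ≤ S.card + psdPt G ↑S := by
  have hstep : psdStep G ↑S ⊆ psdStep G ↑(insert u (S.erase v)) := by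
    simpa only [Finset.coe_insert, Finset.coe_erase] using psdStep_subset_psdStep_insert_diff hN
  by_cases hu : u ∈ S
  · have hcard : (insert u (S.erase v)).card + 1 = S.card := by
      rw [Finset.insert_eq_of_mem (Finset.mem_erase.2
        ⟨(adj_of_neighborSet_eq_singleton hN).ne', hu⟩), Finset.card_erase_add_one hv]
    obtain ⟨hS', hpt⟩ := hS.of_iterate_subset (a := 0) (b := 1) (subset_psdStep.trans hstep)
      (Nat.zero_le _)
    exact ⟨hS', by omega⟩
  · have hcard : (insert u (S.erase v)).card = S.card := by
      rw [Finset.card_insert_of_notMem (fun h => hu (Finset.mem_of_mem_erase h)),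
        Finset.card_erase_add_one hv]
    obtain ⟨hS', hpt⟩ := hS.of_iterate_subset (a := 1) (b := 1) hstep
      (psdPt_pos hS (by exact_mod_cast hu))
    exact ⟨hS', by omega⟩

end PropagationTime

section Throttling

variable [Fintype V]

variable (G) in
def IsPSDThrottlingSet (S : Finset V) : Prop :=
  IsPSDForcingSet G ↑S ∧ psdTh G = S.card + psdPt G ↑S

variable (G) in
theorem exists_isPSDThrottlingSet : ∃ S, IsPSDThrottlingSet G S := by
  have hne : {k | ∃ S : Finset V, IsPSDForcingSet G ↑S ∧ k = S.card + psdPt G ↑S}.Nonempty :=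
    ⟨_, Finset.univ, ⟨0, by simp⟩, rfl⟩
  obtain ⟨S, hS, h⟩ := Nat.sInf_mem hne
  exact ⟨S, hS, h⟩

theorem IsPSDThrottlingSet.of_le {S S' : Finset V} (hS : IsPSDThrottlingSet G S)
    (hS' : IsPSDForcingSet G ↑S') (hle : S'.card + psdPt G ↑S' ≤ S.card + psdPt G ↑S) :
    IsPSDThrottlingSet G S' := by
  have : psdTh G ≤ S'.card + psdPt G ↑S' := Nat.sInf_le ⟨S', hS', rfl⟩
  exact ⟨hS', by have := hS.2; omega⟩

end Throttling

section Leaves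

theorem SimpleGraph.Connected.ncard_neighborSet_ne_one_of_neighborSet_eq_singleton [Fintype V]
    (hG : G.Connected) (hn : 3 ≤ Fintype.card V) {u v : V} (hN : G.neighborSet v = {u}) :
    (G.neighborSet u).ncard ≠ 1 := by
  classical
  intro h1
  obtain ⟨w, hw⟩ := Set.ncard_eq_one.mp h1
  have hNu : G.neighborSet u = {v} := by
    have hv : v ∈ G.neighborSet u := (adj_of_neighborSet_eq_singleton hN).symm
    rw [hw, Set.mem_singleton_iff] at hv
    rw [hw, hv]
  have hpair : ∀ x, Relation.ReflTransGen G.Adj u x → x = u ∨ x = v := by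
    intro x hx
    induction hx with
    | refl => exact Or.inl rfl
    | tail _ hyz ih =>
      rcases ih with rfl | rfl
      · exact Or.inr (eq_of_neighborSet_eq_singleton hNu hyz)
      · exact Or.inl (eq_of_neighborSet_eq_singleton hN hyz)
  have hsub : (Finset.univ : Finset V) ⊆ {u, v} := fun x _ => by
    simpa using hpair x ((reachable_iff_reflTransGen u x).1 (hG u x))
  have := (Finset.card_le_card hsub).trans Finset.card_le_two
  rw [Finset.card_univ] at this
  omega

variable (G) in
open Classical in
noncomputable def SimpleGraph.leafCount (S : Finset V) : ℕ :=
  (S.filter fun v => (G.neighborSet v).ncard = 1).card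

theorem SimpleGraph.leafCount_insert_erase_lt [DecidableEq V] {S : Finset V} {u v : V}
    (hv : v ∈ S) (hleaf : (G.neighborSet v).ncard = 1) (hu : (G.neighborSet u).ncard ≠ 1) :
    G.leafCount (insert u (S.erase v)) < G.leafCount S := by
  unfold leafCount
  rw [Finset.filter_insert, if_neg hu, Finset.filter_erase]
  exact Finset.card_erase_lt_of_mem (Finset.mem_filter.2 ⟨hv, hleaf⟩)

end Leaves

end

theorem stmt_11 {V : Type*} [Fintype V] (T : SimpleGraph V) (hT : T.IsTree)
    (hn : 3 ≤ Fintype.card V) :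
    ∃ S : Finset V, (∀ v ∈ S, (T.neighborSet v).ncard ≠ 1) ∧
      IsPSDForcingSet T ↑S ∧ psdTh T = S.card + psdPt T ↑S := by
  classical
  obtain ⟨S, hS, hmin⟩ := Set.exists_min_image {S | IsPSDThrottlingSet T S} T.leafCount
    (Set.toFinite _) (exists_isPSDThrottlingSet T)
  refine ⟨S, fun v hv hleaf => ?_, hS⟩
  obtain ⟨u, hN⟩ := Set.ncard_eq_one.mp hleaf
  obtain ⟨hS', hle⟩ := hS.1.insert_erase hN hv
  have hu := hT.connected.ncard_neighborSet_ne_one_of_neighborSet_eq_singleton hn hN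
  exact (hmin _ (hS.of_le hS' hle)).not_gt (leafCount_insert_erase_lt hv hleaf hu)
end

section
/- If T is a tree with diameter d, then ⌈√(2(d+1)) − 1/2⌉ ≤ th₊(T) ≤ ⌈d/2⌉ + 1. -/
open SimpleGraph

/-!
Lower bound: if `S` forces `T` in `t` rounds, every vertex is within distance `t` of `S`, so
each vertex of `S` is close to at most `2t + 1` of the `d + 1` vertices of a diametral path.
Hence `d + 1 ≤ |S| (2t + 1)`, and under this constraint `|S| + t ≥ √(2(d + 1)) - 1/2`.

Upper bound: in a tree two neighbours of a blue vertex lie in different white components, so a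
blue vertex forces each of its white neighbours and a single vertex `c` turns the ball of radius
`r` around it blue in `r` rounds. The midpoint of a diametral path has eccentricity `⌈d/2⌉`.
-/

lemma Finset.card_le_add_one_of_forall_sub_le {F : Finset ℕ} {m : ℕ}
    (h : ∀ i ∈ F, ∀ j ∈ F, j - i ≤ m) : F.card ≤ m + 1 := by
  rcases F.eq_empty_or_nonempty with rfl | hF
  · simp
  calc F.card ≤ (Finset.Icc (F.min' hF) (F.min' hF + m)).card :=
        Finset.card_le_card fun j hj ↦ Finset.mem_Icc.mpr
          ⟨F.min'_le j hj, by have := h _ (F.min'_mem hF) j hj; omega⟩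
    _ = m + 1 := by rw [Nat.card_Icc]; omega

lemma Int.ceil_sqrt_two_mul_sub_half_le {d s t : ℕ} (h : d + 1 ≤ s * (2 * t + 1)) :
    ⌈Real.sqrt (2 * ((d : ℝ) + 1)) - 1 / 2⌉ ≤ ((s + t : ℕ) : ℤ) := by
  have h' : ((d : ℝ) + 1) ≤ s * (2 * t + 1) := by exact_mod_cast h
  rw [Int.ceil_le, sub_le_iff_le_add, Real.sqrt_le_iff]
  push_cast
  -- `(s + t + 1/2)^2 - 2 s (2t + 1) = (s - t - 1/2)^2`
  exact ⟨by positivity, by nlinarith [sq_nonneg ((s : ℝ) - t - 1 / 2)]⟩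

namespace SimpleGraph

variable {V : Type*} {G : SimpleGraph V}

lemma Walk.dist_add_dist_of_mem_support {u v w : V} {p : G.Walk u v}
    (hp : p.length = G.dist u v) (hw : w ∈ p.support) :
    G.dist u w + G.dist w v = G.dist u v := by
  classical
  have hsplit := congrArg Walk.length (p.take_spec hw)
  rw [Walk.length_append] at hsplit
  have h₁ := dist_le (p.takeUntil w hw)
  have h₂ := dist_le (p.dropUntil w hw)
  have := (p.takeUntil w hw).reachable.dist_triangle_left v
  omega

lemma Walk.sub_le_dist_getVert {u v : V} {p : G.Walk u v} (hp : p.length = G.dist u v)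
    {i j : ℕ} (hij : i ≤ j) (hj : j ≤ p.length) :
    j - i ≤ G.dist (p.getVert i) (p.getVert j) := by
  have hi := dist_le (p.take i)
  have hj' := dist_le (p.drop j)
  rw [Walk.take_length] at hi
  rw [Walk.drop_length] at hj'
  have := (p.take i).reachable.dist_triangle_left v
  have := (p.drop j).reachable.dist_triangle_right (p.getVert i)
  omega

lemma Connected.exists_dist_eq_of_le (hG : G.Connected) (u v : V) {k : ℕ}
    (hk : k ≤ G.dist u v) : ∃ c, G.dist u c = k ∧ G.dist c v = G.dist u v - k := by
  obtain ⟨p, hp⟩ := hG.exists_walk_length_eq_dist u v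
  refine ⟨p.getVert k, ?_, ?_⟩ <;>
  · have h₁ := dist_le (p.take k)
    have h₂ := dist_le (p.drop k)
    rw [Walk.take_length] at h₁
    rw [Walk.drop_length] at h₂
    have := hG.dist_triangle (u := u) (v := p.getVert k) (w := v)
    omega

lemma IsAcyclic.support_subset_of_isPath (hG : G.IsAcyclic) {u v : V} {p : G.Walk u v}
    (hp : p.IsPath) (q : G.Walk u v) : p.support ⊆ q.support := by
  classical
  have : q.bypass = p :=
    congrArg Subtype.val ((hG.subsingleton_path u v).elim ⟨_, q.bypass_isPath⟩ ⟨p, hp⟩)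
  exact this ▸ q.support_bypass_subset_support

lemma IsTree.dist_eq_add_or_dist_eq_add (hT : G.IsTree) {u v c : V}
    (hc : G.dist u c + G.dist c v = G.dist u v) (x : V) :
    G.dist x u = G.dist x c + G.dist c u ∨ G.dist x v = G.dist x c + G.dist c v := by
  obtain ⟨a, ha⟩ := hT.connected.exists_walk_length_eq_dist u c
  obtain ⟨b, hb⟩ := hT.connected.exists_walk_length_eq_dist c v
  obtain ⟨q₁, hq₁⟩ := hT.connected.exists_walk_length_eq_dist x u
  obtain ⟨q₂, hq₂⟩ := hT.connected.exists_walk_length_eq_dist x v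
  have hab : (a.append b).IsPath :=
    Walk.isPath_of_length_eq_dist _ (by rw [Walk.length_append, ha, hb, hc])
  -- `c` lies on the unique path from `u` to `v`, hence on every walk from `u` to `v`.
  have hcq := hT.isAcyclic.support_subset_of_isPath hab (q₁.reverse.append q₂)
    (Walk.mem_support_append_iff _ _ |>.mpr (.inl a.end_mem_support))
  rw [Walk.mem_support_append_iff, Walk.support_reverse, List.mem_reverse] at hcq
  rcases hcq with hcq | hcq
  · left
    rw [← Walk.dist_add_dist_of_mem_support hq₁ hcq]
  · right
    rw [← Walk.dist_add_dist_of_mem_support hq₂ hcq]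

lemma IsTree.exists_forall_dist_le [Finite V] (hT : G.IsTree) :
    ∃ c, ∀ x, G.dist c x ≤ (G.diam + 1) / 2 := by
  have hG := hT.connected
  have := hG.nonempty
  have hdiam : ∀ x y, G.dist x y ≤ G.diam := fun _ _ ↦
    dist_le_diam (connected_iff_ediam_ne_top.mp hG)
  obtain ⟨u, v, huv⟩ := exists_dist_eq_diam (G := G)
  obtain ⟨c, hu, hv⟩ := hG.exists_dist_eq_of_le u v (k := (G.diam + 1) / 2) (by omega)
  refine ⟨c, fun x ↦ ?_⟩
  have := hdiam x u
  have := hdiam x v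
  have := G.dist_comm (u := c) (v := x)
  have := G.dist_comm (u := c) (v := u)
  rcases hT.dist_eq_add_or_dist_eq_add (u := u) (v := v) (c := c) (by omega) x with h | h <;>
    omega

lemma Connected.dist_add_one_le_card_mul (hG : G.Connected) {S : Finset V} {t : ℕ}
    (hS : ∀ x, ∃ y ∈ S, G.dist y x ≤ t) (u v : V) :
    G.dist u v + 1 ≤ S.card * (2 * t + 1) := by
  classical
  obtain ⟨p, hp⟩ := hG.exists_walk_length_eq_dist u v
  let near (y : V) := (Finset.range (G.dist u v + 1)).filter fun i ↦ G.dist y (p.getVert i) ≤ t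
  have hcover : Finset.range (G.dist u v + 1) ⊆ S.biUnion near := fun i hi ↦ by
    obtain ⟨y, hy, hyi⟩ := hS (p.getVert i)
    exact Finset.mem_biUnion.mpr ⟨y, hy, Finset.mem_filter.mpr ⟨hi, hyi⟩⟩
  have hnear : ∀ y ∈ S, (near y).card ≤ 2 * t + 1 := fun y _ ↦
    Finset.card_le_add_one_of_forall_sub_le fun i hi j hj ↦ by
      simp only [near, Finset.mem_filter, Finset.mem_range] at hi hj
      rcases le_total i j with hij | hji
      · have := p.sub_le_dist_getVert hp hij (by omega)
        have := hG.dist_triangle (u := p.getVert i) (v := y) (w := p.getVert j)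
        have := G.dist_comm (u := y) (v := p.getVert i)
        omega
      · omega
  calc G.dist u v + 1 = (Finset.range (G.dist u v + 1)).card := (Finset.card_range _).symm
    _ ≤ ∑ y ∈ S, (near y).card := (Finset.card_le_card hcover).trans Finset.card_biUnion_le
    _ ≤ ∑ _y ∈ S, (2 * t + 1) := Finset.sum_le_sum hnear
    _ = S.card * (2 * t + 1) := by rw [Finset.sum_const, smul_eq_mul]

lemma exists_walk_of_offReach {B : Set V} {u x : V} (h : offReach G B u x) (hu : u ∉ B) :
    ∃ p : G.Walk u x, ∀ y ∈ p.support, y ∉ B := by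
  induction h with
  | refl => exact ⟨.nil, by simpa using hu⟩
  | tail _ hyx ih =>
    obtain ⟨p, hp⟩ := ih
    refine ⟨p.concat hyx.1, fun y hy ↦ ?_⟩
    rw [Walk.support_concat, List.mem_append, List.mem_singleton] at hy
    rcases hy with hy | rfl
    · exact hp y hy
    · exact hyx.2.2

lemma IsAcyclic.psdForces_of_adj {B : Set V} {v x : V} (hG : G.IsAcyclic) (hv : v ∈ B) (hx : x ∉ B)
    (hvx : G.Adj v x) : psdForces G B v x := by
  refine ⟨hv, hx, hvx, fun u hu hvu hux ↦ ?_⟩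
  by_contra hne
  obtain ⟨p, hp⟩ := exists_walk_of_offReach hux hu
  have hq : (Walk.cons hvu.symm (Walk.cons hvx .nil)).IsPath := by
    simp [hvu.ne', hvx.ne, hne]
  -- the blue `v` separates its neighbours `u` and `x`, so no white walk joins them
  exact hp v (hG.support_subset_of_isPath hq p (by simp)) hv

lemma Connected.exists_dist_le_of_mem_iterate_psdStep (hG : G.Connected) {B : Set V} {n : ℕ}
    {x : V} (hx : x ∈ (psdStep G)^[n] B) : ∃ y ∈ B, G.dist y x ≤ n := by
  induction n generalizing B with
  | zero => exact ⟨x, hx, by simp⟩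
  | succ n ih =>
    rw [Function.iterate_succ_apply] at hx
    obtain ⟨y, hy, hyx⟩ := ih hx
    rcases hy with hy | ⟨v, hv, -, hvy, -⟩
    · exact ⟨y, hy, by omega⟩
    · have := hG.dist_triangle (u := v) (v := y) (w := x)
      have := dist_le hvy.toWalk
      exact ⟨v, hv, by simp only [Walk.length_cons, Walk.length_nil] at this; omega⟩

lemma IsTree.mem_iterate_psdStep_singleton (hT : G.IsTree) {c x : V} {n : ℕ}
    (hx : G.dist c x ≤ n) : x ∈ (psdStep G)^[n] {c} := by
  induction n generalizing x with
  | zero => simp [hT.connected.dist_eq_zero_iff.mp (Nat.le_zero.mp hx)]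
  | succ n ih =>
    rw [Function.iterate_succ_apply']
    by_cases hxn : G.dist c x ≤ n
    · exact .inl (ih hxn)
    obtain ⟨v, hcv, hvx⟩ := hT.connected.exists_dist_eq_of_le c x (k := n) (by omega)
    have hx' : x ∉ (psdStep G)^[n] {c} := fun hx' ↦ by
      obtain ⟨y, rfl, hy⟩ := hT.connected.exists_dist_le_of_mem_iterate_psdStep hx'
      exact hxn hy
    exact .inr ⟨v, hT.isAcyclic.psdForces_of_adj (ih hcv.le) hx' (dist_eq_one_iff_adj.mp (by omega))⟩

end SimpleGraph

lemma exists_psdTh_eq {V : Type*} (G : SimpleGraph V) [Fintype V] :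
    ∃ S : Finset V, (psdStep G)^[psdPt G S] S = Set.univ ∧ psdTh G = S.card + psdPt G S := by
  obtain ⟨S, hS, hth⟩ := Nat.sInf_mem (s := {k | ∃ S : Finset V, IsPSDForcingSet G ↑S ∧
    k = S.card + psdPt G ↑S}) ⟨_, Finset.univ, ⟨0, by simp⟩, rfl⟩
  exact ⟨S, Nat.sInf_mem hS, hth⟩

lemma psdTh_le {V : Type*} {G : SimpleGraph V} [Fintype V] (S : Finset V) {t : ℕ}
    (h : (psdStep G)^[t] S = Set.univ) : psdTh G ≤ S.card + t :=
  calc psdTh G ≤ S.card + psdPt G S := Nat.sInf_le ⟨S, ⟨t, h⟩, rfl⟩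
    _ ≤ S.card + t := Nat.add_le_add_left (Nat.sInf_le (s := {t | (psdStep G)^[t] S = _}) h) _

theorem stmt_13 {V : Type*} [Fintype V] (T : SimpleGraph V) (hT : T.IsTree)
    (d : ℕ) (hd : d = T.diam) :
    (⌈Real.sqrt (2 * ((d : ℝ) + 1)) - 1 / 2⌉ : ℤ) ≤ (psdTh T : ℤ) ∧
    psdTh T ≤ (d + 1) / 2 + 1 := by
  constructor
  · obtain ⟨S, hS, hth⟩ := exists_psdTh_eq T
    have hcover (x : V) : ∃ y ∈ S, T.dist y x ≤ psdPt T S :=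
      hT.connected.exists_dist_le_of_mem_iterate_psdStep (hS ▸ Set.mem_univ x)
    have := hT.connected.nonempty
    obtain ⟨u, v, huv⟩ := exists_dist_eq_diam (G := T)
    rw [hth]
    apply Int.ceil_sqrt_two_mul_sub_half_le
    rw [hd, ← huv]
    exact hT.connected.dist_add_one_le_card_mul hcover u v
  · obtain ⟨c, hc⟩ := hT.exists_forall_dist_le
    have hball : (psdStep T)^[(d + 1) / 2] ↑({c} : Finset V) = Set.univ := by
      rw [Finset.coe_singleton]
      exact Set.eq_univ_of_forall fun x ↦ hT.mem_iterate_psdStep_singleton (hd ▸ hc x)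
    have := psdTh_le _ hball
    rw [Finset.card_singleton] at this
    omega
end

section
/- For a graph G of order n ≥ 2, th₊(G) = 2 if and only if G is the star K_{1,n−1} or G is two isolated vertices (2K₁). -/
open SimpleGraph

lemma psdStep_empty {V : Type*} (G : SimpleGraph V) : psdStep G (∅ : Set V) = ∅ := by
  simp [psdStep, psdForces]

lemma iter_empty {V : Type*} (G : SimpleGraph V) (t : ℕ) :
    (psdStep G)^[t] (∅ : Set V) = ∅ := by
  induction t with
  | zero => rfl
  | succ n ih => rw [Function.iterate_succ_apply', ih, psdStep_empty]

lemma pt_spec {V : Type*} (G : SimpleGraph V) (S : Set V) (h : IsPSDForcingSet G S) :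
    (psdStep G)^[psdPt G S] S = Set.univ :=
  Nat.sInf_mem h

lemma star_step {V : Type*} (G : SimpleGraph V) (c : V)
    (hstar : ∀ v w : V, G.Adj v w ↔ ((v = c ∧ w ≠ c) ∨ (w = c ∧ v ≠ c))) :
    psdStep G ({c} : Set V) = Set.univ := by
  ext w
  simp only [Set.mem_univ, iff_true]
  by_cases hw : w = c
  · exact Set.mem_union_left _ (by simp [hw])
  · refine Set.mem_union_right _ ⟨c, rfl, by simpa using hw, (hstar c w).mpr (Or.inl ⟨rfl, hw⟩), ?_⟩
    intro u hu hadj hreach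
    rcases Relation.ReflTransGen.cases_head hreach with h | ⟨b, ⟨hab, ha, hb⟩, _⟩
    · exact h
    · rcases (hstar u b).mp hab with ⟨h1, _⟩ | ⟨h1, _⟩
      · exact absurd h1 (by simpa using hu)
      · exact absurd h1 (by simpa using hb)

lemma card_ne_zero_of_forcing {V : Type*} [Fintype V] (G : SimpleGraph V)
    (hn : 2 ≤ Fintype.card V) {S : Finset V} (hS : IsPSDForcingSet G ↑S) : S.card ≠ 0 := by
  intro h0
  have hS0 : (S : Set V) = ∅ := by simp [Finset.card_eq_zero.mp h0]
  rw [hS0] at hS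
  obtain ⟨t, ht⟩ := hS
  rw [iter_empty] at ht
  have hne : Nonempty V := Fintype.card_pos_iff.mp (by omega)
  obtain ⟨x⟩ := hne
  have : x ∈ (∅ : Set V) := by rw [ht]; trivial
  exact this

lemma two_le_mem {V : Type*} [Fintype V] (G : SimpleGraph V) (hn : 2 ≤ Fintype.card V)
    {k : ℕ} (hk : k ∈ {k | ∃ S : Finset V, IsPSDForcingSet G ↑S ∧ k = S.card + psdPt G ↑S}) :
    2 ≤ k := by
  obtain ⟨S, hS, rfl⟩ := hk
  by_contra h
  push_neg at h
  have hc := card_ne_zero_of_forcing G hn hS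
  have hc1 : S.card = 1 ∧ psdPt G ↑S = 0 := by omega
  have hsp := pt_spec G ↑S hS
  rw [hc1.2] at hsp
  simp only [Function.iterate_zero, id] at hsp
  rw [Finset.coe_eq_univ] at hsp
  have : Fintype.card V = 1 := by rw [← Finset.card_univ, ← hsp, hc1.1]
  omega

theorem stmt_16 {V : Type*} [Fintype V] (G : SimpleGraph V) (hn : 2 ≤ Fintype.card V) :
    psdTh G = 2 ↔
      ((∃ c : V, ∀ v w : V, G.Adj v w ↔ ((v = c ∧ w ≠ c) ∨ (w = c ∧ v ≠ c))) ∨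
        (Fintype.card V = 2 ∧ G = ⊥)) := by
  constructor
  · intro h
    -- the throttling set is nonempty and 2 is attained
    have hne : {k | ∃ S : Finset V, IsPSDForcingSet G ↑S ∧ k = S.card + psdPt G ↑S}.Nonempty := by
      by_contra hemp
      rw [Set.not_nonempty_iff_eq_empty] at hemp
      rw [psdTh, hemp, Nat.sInf_empty] at h
      omega
    have h2 : 2 ∈ {k | ∃ S : Finset V, IsPSDForcingSet G ↑S ∧ k = S.card + psdPt G ↑S} := by
      rw [← h]; exact Nat.sInf_mem hne
    obtain ⟨S, hS, hk⟩ := h2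
    have hc := card_ne_zero_of_forcing G hn hS
    have hcase : (S.card = 1 ∧ psdPt G ↑S = 1) ∨ (S.card = 2 ∧ psdPt G ↑S = 0) := by omega
    classical
    rcases hcase with ⟨hc1, hp1⟩ | ⟨hc2, hp0⟩
    · -- star case: a single vertex forces everything in one round
      obtain ⟨c, rfl⟩ := Finset.card_eq_one.mp hc1
      have hsp := pt_spec G ↑({c} : Finset V) hS
      rw [hp1, Function.iterate_one] at hsp
      have hstep : psdStep G ({c} : Set V) = Set.univ := by simpa using hsp
      have key : ∀ w, w ≠ c → G.Adj c w ∧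
          ∀ u, u ≠ c → G.Adj c u → offReach G ({c} : Set V) u w → u = w := by
        intro w hw
        have hmem : w ∈ psdStep G ({c} : Set V) := by rw [hstep]; trivial
        rcases hmem with hmem | ⟨v, hvB, hwB, hadj, huniq⟩
        · exact absurd (by simpa using hmem) hw
        · have hv : v = c := by simpa using hvB
          subst hv
          exact ⟨hadj, fun u hu => huniq u (by simpa using hu)⟩
      have noedge : ∀ a b : V, a ≠ c → b ≠ c → ¬ G.Adj a b := by
        intro a b ha hb hab
        have hba : b = a := (key a ha).2 b hb (key b hb).1
          (Relation.ReflTransGen.single ⟨hab.symm, by simpa using hb, by simpa using ha⟩)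
        exact G.irrefl (hba ▸ hab)
      left
      refine ⟨c, fun v w => ?_⟩
      constructor
      · intro hadj
        by_cases hv : v = c
        · exact Or.inl ⟨hv, fun hw => hadj.ne (hv.trans hw.symm)⟩
        · by_cases hw : w = c
          · exact Or.inr ⟨hw, hv⟩
          · exact absurd hadj (noedge v w hv hw)
      · rintro (⟨rfl, hw⟩ | ⟨rfl, hv⟩)
        · exact (key w hw).1
        · exact ((key v hv).1).symm
    · -- |S| = 2, propagation time 0 : the whole vertex set is blue
      have hsp := pt_spec G ↑S hS
      rw [hp0] at hsp
      simp only [Function.iterate_zero, id] at hsp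
      rw [Finset.coe_eq_univ] at hsp
      have hcard2 : Fintype.card V = 2 := by rw [← Finset.card_univ, ← hsp, hc2]
      by_cases hG : ∃ a b : V, G.Adj a b
      · obtain ⟨a, b, hab⟩ := hG
        have key : ∀ v : V, v = a ∨ v = b := by
          intro v
          by_contra hv
          push_neg at hv
          have h3 : ({v, a, b} : Finset V).card = 3 := by
            rw [Finset.card_insert_of_notMem (by simp [hv.1, hv.2]),
              Finset.card_insert_of_notMem (by simp [hab.ne]), Finset.card_singleton]
          have hle : ({v, a, b} : Finset V).card ≤ Fintype.card V := Finset.card_le_univ _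
          omega
        left
        refine ⟨a, fun v w => ?_⟩
        rcases key v with rfl | rfl <;> rcases key w with rfl | rfl <;>
          simp [hab, hab.symm, hab.ne, hab.ne', G.irrefl]
      · right
        refine ⟨hcard2, ?_⟩
        ext v w
        simp only [bot_adj, iff_false]
        exact fun hadj => hG ⟨v, w, hadj⟩
  · intro h
    -- first, a suitable set of total cost 2 in each case
    have hmem2 : 2 ∈ {k | ∃ S : Finset V, IsPSDForcingSet G ↑S ∧ k = S.card + psdPt G ↑S} := by
      rcases h with ⟨c, hstar⟩ | ⟨hcard2, hbot⟩
      · -- star: take S = {c}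
        have hstep : psdStep G ({c} : Set V) = Set.univ := star_step G c hstar
        have hforce : IsPSDForcingSet G ↑({c} : Finset V) := by
          refine ⟨1, ?_⟩
          rw [Function.iterate_one]
          simpa using hstep
        refine ⟨{c}, hforce, ?_⟩
        have hone : psdPt G ↑({c} : Finset V) = 1 := by
          have h1 : 1 ∈ {t | (psdStep G)^[t] (↑({c} : Finset V) : Set V) = Set.univ} := by
            simp only [Set.mem_setOf_eq, Function.iterate_one]
            simpa using hstep
          have h0 : 0 ∉ {t | (psdStep G)^[t] (↑({c} : Finset V) : Set V) = Set.univ} := by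
            simp only [Set.mem_setOf_eq, Function.iterate_zero, id]
            intro habs
            obtain ⟨w, hw⟩ := Fintype.exists_ne_of_one_lt_card (by omega) c
            have : w ∈ (↑({c} : Finset V) : Set V) := by rw [habs]; trivial
            exact hw (by simpa using this)
          refine le_antisymm (Nat.sInf_le h1) ?_
          rcases Nat.eq_zero_or_pos (psdPt G ↑({c} : Finset V)) with hz | hp
          · exact absurd (hz ▸ Nat.sInf_mem ⟨1, h1⟩) h0
          · exact hp
        rw [hone]; simp
      · -- two vertices: take S = univ
        have hforce : IsPSDForcingSet G ↑(Finset.univ : Finset V) := ⟨0, by simp⟩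
        refine ⟨Finset.univ, hforce, ?_⟩
        have h0 : psdPt G ↑(Finset.univ : Finset V) = 0 :=
          Nat.eq_zero_of_le_zero (Nat.sInf_le (by simp))
        rw [h0, Finset.card_univ, hcard2]
      
    refine le_antisymm (Nat.sInf_le hmem2) ?_
    have := Nat.sInf_mem (⟨2, hmem2⟩ :
      {k | ∃ S : Finset V, IsPSDForcingSet G ↑S ∧ k = S.card + psdPt G ↑S}.Nonempty)
    exact two_le_mem G hn this
end

section
/- Let G be a graph with independence number α(G) = 2 and with no induced subgraph isomorphic to C₅, the house, or the double diamond. If W ⊆ V(G) induces two disjoint nontrivial cliques (each with at least 2 vertices), then the complement of W is not a positive semidefinite zero forcing set of G. -/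
open SimpleGraph

/-- The house graph: a 5-cycle 0-1-2-3-4-0 with the chord 1-4
(a triangle on top of a 4-cycle). -/
def houseGraph : SimpleGraph (Fin 5) :=
  SimpleGraph.fromRel fun a b =>
    ((a : ℕ), (b : ℕ)) ∈ [(0, 1), (1, 2), (2, 3), (3, 4), (4, 0), (1, 4)]

/-- The double diamond graph on 6 vertices: with labels x = 0, x' = 1, w = 2, y = 3,
z' = 4, z = 5, the edges are xy, wz, x'x, x'z, x'w, z'z, z'x, z'y, x'z'
(two diamonds glued along the edge x'z'). -/
def doubleDiamondGraph : SimpleGraph (Fin 6) :=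
  SimpleGraph.fromRel fun a b =>
    ((a : ℕ), (b : ℕ)) ∈ [(0, 3), (2, 5), (1, 0), (1, 5), (1, 2), (4, 5), (4, 0), (4, 3), (1, 4)]

/-- `G` has an induced subgraph isomorphic to `H`. -/
def HasInducedCopy {V W : Type*} (G : SimpleGraph V) (H : SimpleGraph W) : Prop :=
  ∃ f : W → V, Function.Injective f ∧ ∀ a b : W, G.Adj (f a) (f b) ↔ H.Adj a b

instance : DecidableRel houseGraph.Adj := fun a b =>
  decidable_of_iff' _ (SimpleGraph.fromRel_adj _ a b)

instance : DecidableRel doubleDiamondGraph.Adj := fun a b =>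
  decidable_of_iff' _ (SimpleGraph.fromRel_adj _ a b)

lemma aux_no_force {V : Type*} (G : SimpleGraph V) (W₁ W₂ : Set V)
    (hcl₂ : G.IsClique W₂)
    (hsep : ∀ a ∈ W₁, ∀ b ∈ W₂, ¬ G.Adj a b)
    (hP : ¬ ∃ v, v ∉ W₁ ∪ W₂ ∧ ∃ w ∈ W₂, G.Adj v w ∧ ∀ w' ∈ W₂, G.Adj v w' → w' = w) :
    ∀ t, ∀ x ∈ W₂, x ∉ (psdStep G)^[t] (W₁ ∪ W₂)ᶜ := by
  intro t
  induction t with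
  | zero => intro x hx hmem; exact hmem (Or.inr hx)
  | succ n ih =>
    intro x hx hmem
    rw [Function.iterate_succ_apply'] at hmem
    simp only [psdStep, Set.mem_union, Set.mem_setOf_eq, psdForces] at hmem
    rcases hmem with hB | ⟨v, hvB, hxB, hadj, huniq⟩
    · exact ih x hx hB
    · apply hP
      refine ⟨v, ?_, x, hx, hadj, ?_⟩
      · rintro (h1 | h2)
        · exact hsep v h1 x hx hadj
        · exact ih v h2 hvB
      · intro w' hw' hadj'
        apply huniq w' (ih w' hw') hadj'
        by_cases hwx : w' = x
        · subst hwx; exact Relation.ReflTransGen.refl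
        · exact Relation.ReflTransGen.single ⟨hcl₂ hw' hx hwx, ih w' hw', ih x hx⟩

theorem stmt_18 {V : Type*} [Fintype V] (G : SimpleGraph V)
    (hα : (∃ u v : V, u ≠ v ∧ ¬ G.Adj u v) ∧
      ∀ a b c : V, a ≠ b → b ≠ c → a ≠ c →
        ¬ G.Adj a b → ¬ G.Adj b c → ¬ G.Adj a c → False)
    (hC5 : ¬ HasInducedCopy G (SimpleGraph.cycleGraph 5))
    (hHouse : ¬ HasInducedCopy G houseGraph)
    (hDD : ¬ HasInducedCopy G doubleDiamondGraph)
    (W W₁ W₂ : Set V) (hW : W = W₁ ∪ W₂) (hdisj : Disjoint W₁ W₂)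
    (hcl₁ : G.IsClique W₁) (hcl₂ : G.IsClique W₂)
    (h₁ : 2 ≤ W₁.ncard) (h₂ : 2 ≤ W₂.ncard)
    (hsep : ∀ a ∈ W₁, ∀ b ∈ W₂, ¬ G.Adj a b) :
    ¬ IsPSDForcingSet G Wᶜ := by
  rintro ⟨t, ht⟩
  subst hW
  by_cases hP₂ : ∃ v, v ∉ W₁ ∪ W₂ ∧ ∃ w ∈ W₂, G.Adj v w ∧ ∀ w' ∈ W₂, G.Adj v w' → w' = w
  swap
  · obtain ⟨x, hx⟩ := Set.nonempty_of_ncard_ne_zero (s := W₂) (by omega)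
    exact aux_no_force G W₁ W₂ hcl₂ hsep hP₂ t x hx (ht ▸ Set.mem_univ x)
  by_cases hP₁ : ∃ v, v ∉ W₂ ∪ W₁ ∧ ∃ w ∈ W₁, G.Adj v w ∧ ∀ w' ∈ W₁, G.Adj v w' → w' = w
  swap
  · obtain ⟨x, hx⟩ := Set.nonempty_of_ncard_ne_zero (s := W₁) (by omega)
    have ht' : (psdStep G)^[t] (W₂ ∪ W₁)ᶜ = Set.univ := by rwa [Set.union_comm]
    exact aux_no_force G W₂ W₁ hcl₁ (fun a ha b hb hadj => hsep b hb a ha hadj.symm) hP₁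
      t x hx (ht' ▸ Set.mem_univ x)
  obtain ⟨u, huW, a₂, ha₂, hua₂, huniq₂⟩ := hP₂
  obtain ⟨v, hvW, a₁, ha₁, hva₁, huniq₁⟩ := hP₁
  rw [Set.union_comm] at hvW
  obtain ⟨b₁, hb₁, hb₁ne⟩ := Set.exists_ne_of_one_lt_ncard (s := W₁) (by omega) a₁
  obtain ⟨b₂, hb₂, hb₂ne⟩ := Set.exists_ne_of_one_lt_ncard (s := W₂) (by omega) a₂
  -- basic non-adjacencies
  have hvb₁ : ¬ G.Adj v b₁ := fun h => hb₁ne (huniq₁ b₁ hb₁ h)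
  have hub₂ : ¬ G.Adj u b₂ := fun h => hb₂ne (huniq₂ b₂ hb₂ h)
  -- distinctness helpers
  have hcr : ∀ x ∈ W₁, ∀ y ∈ W₂, x ≠ y := fun x hx y hy => hdisj.ne_of_mem hx hy
  have hvne : ∀ x ∈ W₁ ∪ W₂, v ≠ x := fun x hx h => hvW (h ▸ hx)
  have hune : ∀ x ∈ W₁ ∪ W₂, u ≠ x := fun x hx h => huW (h ▸ hx)
  -- v adjacent to all of W₂
  have hvW₂ : ∀ b ∈ W₂, G.Adj v b := by
    intro b hb
    by_contra hvb
    exact hα.2 v b₁ b (hvne b₁ (Or.inl hb₁)) (hcr b₁ hb₁ b hb) (hvne b (Or.inr hb))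
      hvb₁ (hsep b₁ hb₁ b hb) hvb
  -- u adjacent to all of W₁
  have huW₁ : ∀ a ∈ W₁, G.Adj u a := by
    intro a ha
    by_contra hua
    exact hα.2 u b₂ a (hune b₂ (Or.inr hb₂)) (Ne.symm (hcr a ha b₂ hb₂))
      (hune a (Or.inl ha)) hub₂ (fun h => hsep a ha b₂ hb₂ h.symm) hua
  -- adjacency facts
  have e1 : G.Adj a₁ b₁ := hcl₁ ha₁ hb₁ (Ne.symm hb₁ne)
  have e1' := e1.symm
  have e2 : G.Adj a₂ b₂ := hcl₂ ha₂ hb₂ (Ne.symm hb₂ne)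
  have e2' := e2.symm
  have e3 : G.Adj v a₁ := hva₁
  have e3' := e3.symm
  have e4 : G.Adj v a₂ := hvW₂ a₂ ha₂
  have e4' := e4.symm
  have e5 : G.Adj v b₂ := hvW₂ b₂ hb₂
  have e5' := e5.symm
  have e6 : G.Adj u a₂ := hua₂
  have e6' := e6.symm
  have e7 : G.Adj u a₁ := huW₁ a₁ ha₁
  have e7' := e7.symm
  have e8 : G.Adj u b₁ := huW₁ b₁ hb₁
  have e8' := e8.symm
  -- non-adjacency facts
  have n1 : ¬ G.Adj v b₁ := hvb₁
  have n1' : ¬ G.Adj b₁ v := fun h => n1 h.symm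
  have n2 : ¬ G.Adj u b₂ := hub₂
  have n2' : ¬ G.Adj b₂ u := fun h => n2 h.symm
  have n3 : ¬ G.Adj a₁ a₂ := hsep a₁ ha₁ a₂ ha₂
  have n3' : ¬ G.Adj a₂ a₁ := fun h => n3 h.symm
  have n4 : ¬ G.Adj a₁ b₂ := hsep a₁ ha₁ b₂ hb₂
  have n4' : ¬ G.Adj b₂ a₁ := fun h => n4 h.symm
  have n5 : ¬ G.Adj b₁ a₂ := hsep b₁ hb₁ a₂ ha₂
  have n5' : ¬ G.Adj a₂ b₁ := fun h => n5 h.symm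
  have n6 : ¬ G.Adj b₁ b₂ := hsep b₁ hb₁ b₂ hb₂
  have n6' : ¬ G.Adj b₂ b₁ := fun h => n6 h.symm
  -- distinctness facts
  have d1 : a₁ ≠ b₁ := Ne.symm hb₁ne
  have d1' := d1.symm
  have d2 : a₂ ≠ b₂ := Ne.symm hb₂ne
  have d2' := d2.symm
  have d3 : a₁ ≠ a₂ := hcr a₁ ha₁ a₂ ha₂
  have d3' := d3.symm
  have d4 : a₁ ≠ b₂ := hcr a₁ ha₁ b₂ hb₂
  have d4' := d4.symm
  have d5 : b₁ ≠ a₂ := hcr b₁ hb₁ a₂ ha₂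
  have d5' := d5.symm
  have d6 : b₁ ≠ b₂ := hcr b₁ hb₁ b₂ hb₂
  have d6' := d6.symm
  have d7 : v ≠ a₁ := hvne a₁ (Or.inl ha₁)
  have d7' := d7.symm
  have d8 : v ≠ b₁ := hvne b₁ (Or.inl hb₁)
  have d8' := d8.symm
  have d9 : v ≠ a₂ := hvne a₂ (Or.inr ha₂)
  have d9' := d9.symm
  have d10 : v ≠ b₂ := hvne b₂ (Or.inr hb₂)
  have d10' := d10.symm
  have d11 : u ≠ a₁ := hune a₁ (Or.inl ha₁)
  have d11' := d11.symm
  have d12 : u ≠ b₁ := hune b₁ (Or.inl hb₁)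
  have d12' := d12.symm
  have d13 : u ≠ a₂ := hune a₂ (Or.inr ha₂)
  have d13' := d13.symm
  have d14 : u ≠ b₂ := hune b₂ (Or.inr hb₂)
  have d14' := d14.symm
  have d15 : v ≠ u := fun h => hub₂ (h ▸ e5)
  have d15' := d15.symm
  by_cases hadj : G.Adj v u
  · -- double diamond on a₁ v b₂ b₁ u a₂
    have hadj' := hadj.symm
    apply hDD
    refine ⟨![a₁, v, b₂, b₁, u, a₂], ?_, ?_⟩
    · intro i j hij
      fin_cases i <;> fin_cases j <;>
        first
          | rfl
          | exact absurd hij (by assumption)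
    · intro a b
      fin_cases a <;> fin_cases b <;>
        first
          | exact iff_of_false (G.irrefl) (by decide)
          | exact iff_of_true (by assumption) (by decide)
          | exact iff_of_false (by assumption) (by decide)
  · -- house on b₁ u a₂ v a₁
    have hadj' : ¬ G.Adj u v := fun h => hadj h.symm
    apply hHouse
    refine ⟨![b₁, u, a₂, v, a₁], ?_, ?_⟩
    · intro i j hij
      fin_cases i <;> fin_cases j <;>
        first
          | rfl
          | exact absurd hij (by assumption)
    · intro a b
      fin_cases a <;> fin_cases b <;>
        first
          | exact iff_of_false (G.irrefl) (by decide)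
          | exact iff_of_true (by assumption) (by decide)
          | exact iff_of_false (by assumption) (by decide)
end
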